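/- An increasing union of pseudoconvex open sets in ℂ^n is pseudoconvex. -/

import Mathlib

open Filter MeasureTheory Metric Set

noncomputable section

variable {E : Type*} [NormedAddCommGroup E] [NormedSpace ℂ E]

/-- Plurisubharmonic on a set: upper semicontinuous together with the
sub-mean-value inequality on small circles along every complex direction. -/
def PSHOn (u : E → ℝ) (Ω : Set E) : Prop :=
  UpperSemicontinuousOn u Ω ∧
    ∀ z ∈ Ω, ∀ v : E, ∃ R > (0 : ℝ), ∀ r : ℝ, 0 < r → r < R →
      (∀ t : ℂ, ‖t‖ ≤ r → z + t • v ∈ Ω) →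
      u z ≤ (1 / (2 * Real.pi)) *
        ∫ θ in (0 : ℝ)..(2 * Real.pi),
          u (z + (((r : ℂ) * Complex.exp ((θ : ℂ) * Complex.I)) • v))

open scoped Classical in
/-- The boundary extension `û` of a function on `Ω`. -/
def hatVal (u : E → ℝ) (Ω : Set E) (z : E) : ℝ :=
  if z ∈ Ω then u z else limsup u (nhdsWithin z Ω)

/-- Competitors in the definition of the plurisubharmonic measure. -/
def pshCompetitor (A Ω : Set E) (u : E → ℝ) : Prop :=
  PSHOn u Ω ∧ (∀ z ∈ Ω, u z ≤ 1) ∧ ∀ a ∈ A, hatVal u Ω a ≤ 0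

/-- The relative extremal function `h_{A,Ω}`. -/
def relExtr (A Ω : Set E) (z : E) : ℝ :=
  sSup {t : ℝ | ∃ u : E → ℝ, pshCompetitor A Ω u ∧ t = u z}

/-- The plurisubharmonic (harmonic, if `E = ℂ`) measure `ω(·, A, Ω)`:
the upper semicontinuous regularization of `h_{A,Ω}`. -/
def pshMeasure (A Ω : Set E) (z : E) : ℝ :=
  limsup (relExtr A Ω) (nhdsWithin z Ω)

/-- Pseudoconvexity: `-log dist(·, ∂Ω)` is plurisubharmonic on `Ω`. -/
def IsPseudoconvex (Ω : Set E) : Prop :=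
  IsOpen Ω ∧ (Ω = univ ∨ PSHOn (fun z => -Real.log (infDist z Ωᶜ)) Ω)

end

/-!
Along a complex line, `-log dist(·, ∂Ω_j)` satisfies the sub-mean-value inequality only on
circles of radius below some bound depending on `j`. Subharmonicity is local, however: uniformly
approximating the values on a circle by the real part of a polynomial (density of trigonometric
polynomials) and applying the maximum principle to the difference shows that a continuous
function with the local sub-mean-value property satisfies it on every circle whose disc lies in
the domain. A closed disc in `⋃ Ω_j` lies in a single `Ω_j` by compactness, and on it
`-log dist(·, ∂Ω_k)` decreases as `k → ∞` to `-log dist(·, ∂Ω)`, because every closed ball in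
`⋃ Ω_j` eventually lies in `Ω_k`. Monotone convergence passes the inequalities to the limit.
-/
open Real Topology

namespace Real

theorem circleAverage_re_of_differentiable {f : ℂ → ℂ} (hf : Differentiable ℂ f) (c : ℂ)
    (R : ℝ) : circleAverage (fun x => (f x).re) c R = (f c).re :=
  calc circleAverage (fun x => (f x).re) c R = Complex.reCLM (circleAverage f c R) :=
        Complex.reCLM.circleAverage_comp_comm hf.continuous.continuousOn.circleIntegrable'
    _ = (f c).re := by rw [hf.diffContOnCl.circleAverage, Complex.reCLM_apply]

theorem circleAverage_norm_sub_sq (c p : ℂ) (ρ : ℝ) :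
    circleAverage (fun x => ‖x - c‖ ^ 2) p ρ = ‖p - c‖ ^ 2 + ρ ^ 2 := by
  set f : ℂ → ℂ := fun x =>
    ((2 : ℝ) : ℂ) * ((x - p) * (starRingEnd ℂ) (p - c)) + Complex.normSq (p - c)
  have hf : Differentiable ℂ f := by fun_prop
  have hsplit : (fun x => ‖x - c‖ ^ 2) = fun x => (f x).re + ‖x - p‖ ^ 2 := by
    funext x
    simp only [← Complex.normSq_eq_norm_sq]
    rw [show x - c = (x - p) + (p - c) by ring, Complex.normSq_add]
    simp only [f, Complex.add_re, Complex.re_ofReal_mul, Complex.ofReal_re]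
    ring
  have hfre : Continuous fun x => (f x).re := Complex.continuous_re.comp hf.continuous
  rw [hsplit, circleAverage_fun_add hfre.continuousOn.circleIntegrable'
    (by fun_prop : Continuous fun x : ℂ => ‖x - p‖ ^ 2).continuousOn.circleIntegrable',
    circleAverage_re_of_differentiable hf,
    circleAverage_const_on_circle (a := ρ ^ 2) fun x hx => by
      rw [mem_sphere_iff_norm.1 hx, sq_abs]]
  simp only [f, sub_self, zero_mul, mul_zero, zero_add, Complex.ofReal_re,
    Complex.normSq_eq_norm_sq]

theorem tendsto_circleAverage_of_antitone {f : ℕ → ℂ → ℝ} {F : ℂ → ℝ} {c : ℂ} {R : ℝ}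
    (hf : ∀ n, CircleIntegrable (f n) c R) (hF : CircleIntegrable F c R)
    (hanti : ∀ x ∈ sphere c |R|, Antitone fun n => f n x)
    (hlim : ∀ x ∈ sphere c |R|, Tendsto (fun n => f n x) atTop (𝓝 (F x))) :
    Tendsto (fun n => circleAverage (f n) c R) atTop (𝓝 (circleAverage F c R)) := by
  simp only [circleAverage_def, intervalIntegral.integral_of_le two_pi_pos.le]
  refine (MeasureTheory.integral_tendsto_of_tendsto_of_antitone (fun n => (hf n).1) hF.1
    ?_ ?_).const_smul _ <;> refine ae_of_all _ fun θ => ?_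
  exacts [hanti _ (circleMap_mem_sphere' c R θ), hlim _ (circleMap_mem_sphere' c R θ)]

end Real

theorem re_mul_fourier {T : ℝ} (a : ℂ) (n : ℤ) (x : AddCircle T) :
    (a * fourier n x).re
      = ((if 0 ≤ n then a else (starRingEnd ℂ) a) * (AddCircle.toCircle x : ℂ) ^ n.natAbs).re := by
  split_ifs with hn
  · lift n to ℕ using hn
    simp [fourier_apply, AddCircle.toCircle_nsmul]
  · obtain ⟨k, rfl⟩ : ∃ k : ℕ, n = -k := ⟨n.natAbs, by omega⟩
    rw [fourier_neg, ← Complex.conj_re, map_mul, Complex.conj_conj, Int.natAbs_neg,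
      Int.natAbs_natCast, fourier_apply, natCast_zsmul, AddCircle.toCircle_nsmul, Circle.coe_pow]

theorem exists_differentiable_re_approx_on_sphere {w : ℂ → ℝ} {c : ℂ} {r : ℝ} (hr : 0 < r)
    (hw : ContinuousOn w (sphere c r)) {ε : ℝ} (hε : 0 < ε) :
    ∃ f : ℂ → ℂ, Differentiable ℂ f ∧ ∀ x ∈ sphere c r, |w x - (f x).re| ≤ ε := by
  have : Fact (0 < 2 * π) := ⟨two_pi_pos⟩
  set φ : AddCircle (2 * π) → ℂ := fun θ => c + r * (AddCircle.toCircle θ : ℂ)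
  have hφs : ∀ θ, φ θ ∈ sphere c r := fun θ => by simp [φ, abs_of_pos hr, Circle.norm_coe]
  have hφsurj : ∀ x ∈ sphere c r, ∃ θ, φ θ = x := by
    intro x hx
    refine ⟨(Complex.arg (x - c) : AddCircle (2 * π)), ?_⟩
    have h2π : 2 * π / (2 * π) = 1 := div_self two_pi_pos.ne'
    simp only [φ, AddCircle.toCircle_apply_mk, h2π, one_mul, Circle.coe_exp,
      ← mem_sphere_iff_norm.1 hx, Complex.norm_mul_exp_arg_mul_I, add_sub_cancel]
  let F : C(AddCircle (2 * π), ℂ) :=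
    ⟨fun θ => (w (φ θ) : ℂ), Complex.continuous_ofReal.comp (hw.comp_continuous (by fun_prop) hφs)⟩
  have hF : F ∈ closure (Submodule.span ℂ (range (fourier (T := 2 * π))) : Set _) := by
    rw [← Submodule.topologicalClosure_coe, span_fourier_closure_eq_top]
    trivial
  obtain ⟨G, hG, hFG⟩ := Metric.mem_closure_iff.1 hF ε hε
  obtain ⟨a, rfl⟩ := Finsupp.mem_span_range_iff_exists_finsupp.1 hG
  set f : ℂ → ℂ := fun x => ∑ n ∈ a.support,
    (if 0 ≤ n then a n else (starRingEnd ℂ) (a n)) * ((x - c) / r) ^ n.natAbs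
  refine ⟨f, by fun_prop, fun x hx => ?_⟩
  obtain ⟨θ, rfl⟩ := hφsurj x hx
  have hfθ : (f (φ θ)).re = ((a.sum fun n b => b • fourier n) θ).re := by
    have hr' : (r : ℂ) ≠ 0 := Complex.ofReal_ne_zero.2 hr.ne'
    simp only [f, φ, add_sub_cancel_left, mul_div_cancel_left₀ _ hr', Finsupp.sum,
      ContinuousMap.coe_sum, Finset.sum_apply, ContinuousMap.coe_smul, Pi.smul_apply,
      smul_eq_mul, Complex.re_sum, re_mul_fourier]
  calc |w (φ θ) - (f (φ θ)).re| = |(F θ - (a.sum fun n b => b • fourier n) θ).re| := by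
        rw [hfθ, Complex.sub_re]; rfl
    _ ≤ ‖F θ - (a.sum fun n b => b • fourier n) θ‖ := Complex.abs_re_le_norm _
    _ ≤ ε := by rw [← dist_eq_norm]; exact (ContinuousMap.dist_apply_le_dist θ).trans hFG.le

def HasLocalSubmeanOn (g : ℂ → ℝ) (U : Set ℂ) : Prop :=
  ∀ p ∈ U, ∃ R > (0 : ℝ), ∀ ρ : ℝ, 0 < ρ → ρ < R → closedBall p ρ ⊆ U →
    g p ≤ circleAverage g p ρ

namespace HasLocalSubmeanOn

variable {g : ℂ → ℝ} {U : Set ℂ}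

theorem sub_re (hg : HasLocalSubmeanOn g U) (hgc : ContinuousOn g U) {f : ℂ → ℂ}
    (hf : Differentiable ℂ f) : HasLocalSubmeanOn (fun x => g x - (f x).re) U := by
  intro p hp
  obtain ⟨R, hR, hsub⟩ := hg p hp
  refine ⟨R, hR, fun ρ hρ hρR hball => ?_⟩
  have hgi : CircleIntegrable g p ρ :=
    (hgc.mono (sphere_subset_closedBall.trans hball)).circleIntegrable hρ.le
  have hfi : CircleIntegrable (fun x => (f x).re) p ρ :=
    (Complex.continuous_re.comp hf.continuous).continuousOn.circleIntegrable'
  rw [circleAverage_fun_sub hgi hfi, circleAverage_re_of_differentiable hf]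
  linarith [hsub ρ hρ hρR hball]

/-- Circle averages of `‖x - c‖ ^ 2` exceed its value at the centre by `ρ ^ 2`, so adding
`δ * ‖x - c‖ ^ 2` makes the sub-mean-value inequality strict, which rules out interior maxima. -/
theorem mem_sphere_of_isMaxOn_add_sq (hg : HasLocalSubmeanOn g U) (hgc : ContinuousOn g U)
    {c p : ℂ} {r δ : ℝ} (hδ : 0 < δ) (hD : closedBall c r ⊆ U) (hp : p ∈ closedBall c r)
    (hmax : IsMaxOn (fun x => g x + δ * ‖x - c‖ ^ 2) (closedBall c r) p) :
    p ∈ sphere c r := by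
  by_contra hps
  have hpr : dist p c < r := lt_of_le_of_ne hp hps
  obtain ⟨R, hR, hsub⟩ := hg p (hD hp)
  obtain ⟨ρ, hρ, hρR, hρr⟩ : ∃ ρ, 0 < ρ ∧ ρ < R ∧ ρ + dist p c ≤ r :=
    ⟨min R (r - dist p c) / 2, div_pos (lt_min hR (by linarith)) two_pos,
      by linarith [min_le_left R (r - dist p c)], by linarith [min_le_right R (r - dist p c)]⟩
  have hball : closedBall p ρ ⊆ closedBall c r := closedBall_subset_closedBall' hρr
  have hgi : CircleIntegrable g p ρ :=
    (hgc.mono (sphere_subset_closedBall.trans (hball.trans hD))).circleIntegrable hρ.le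
  have hqi : CircleIntegrable (fun x => δ * ‖x - c‖ ^ 2) p ρ :=
    (by fun_prop : Continuous fun x : ℂ => δ * ‖x - c‖ ^ 2).continuousOn.circleIntegrable'
  have hmean : circleAverage (fun x => g x + δ * ‖x - c‖ ^ 2) p ρ
      = circleAverage g p ρ + δ * (‖p - c‖ ^ 2 + ρ ^ 2) := by
    rw [circleAverage_fun_add hgi hqi, ← circleAverage_norm_sub_sq, ← smul_eq_mul,
      ← circleAverage_fun_smul]
    rfl
  have hle : circleAverage (fun x => g x + δ * ‖x - c‖ ^ 2) p ρ ≤ g p + δ * ‖p - c‖ ^ 2 :=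
    circleAverage_mono_on_of_le_circle (hgi.add hqi) fun x hx =>
      hmax (hball (sphere_subset_closedBall (by rwa [abs_of_pos hρ] at hx)))
  linarith [hsub ρ hρ hρR (hball.trans hD), mul_pos hδ (pow_pos hρ 2)]

theorem le_of_forall_sphere_le (hg : HasLocalSubmeanOn g U) (hgc : ContinuousOn g U)
    {c : ℂ} {r M : ℝ} (hr : 0 < r) (hD : closedBall c r ⊆ U)
    (hM : ∀ x ∈ sphere c r, g x ≤ M) : g c ≤ M := by
  refine le_of_forall_pos_le_add fun ε hε => ?_
  obtain ⟨p, hp, hmax⟩ := (isCompact_closedBall c r).exists_isMaxOn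
    (f := fun x => g x + ε / r ^ 2 * ‖x - c‖ ^ 2) (nonempty_closedBall.2 hr.le)
    ((hgc.mono hD).add (by fun_prop : Continuous fun x : ℂ => ε / r ^ 2 * ‖x - c‖ ^ 2).continuousOn)
  have hps := hg.mem_sphere_of_isMaxOn_add_sq hgc (by positivity) hD hp hmax
  calc g c = g c + ε / r ^ 2 * ‖c - c‖ ^ 2 := by simp
    _ ≤ g p + ε / r ^ 2 * ‖p - c‖ ^ 2 := isMaxOn_iff.1 hmax c (mem_closedBall_self hr.le)
    _ = g p + ε := by rw [mem_sphere_iff_norm.1 hps, div_mul_cancel₀ _ (pow_ne_zero 2 hr.ne')]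
    _ ≤ M + ε := by linarith [hM p hps]

theorem le_circleAverage (hg : HasLocalSubmeanOn g U) (hgc : ContinuousOn g U) {c : ℂ} {r : ℝ}
    (hr : 0 < r) (hD : closedBall c r ⊆ U) :
    g c ≤ circleAverage g c r := by
  refine le_of_forall_pos_le_add fun ε hε => ?_
  have hgs : ContinuousOn g (sphere c r) := hgc.mono (sphere_subset_closedBall.trans hD)
  obtain ⟨f, hf, happrox⟩ := exists_differentiable_re_approx_on_sphere hr hgs (half_pos hε)
  have hfre : Continuous fun x => (f x).re := Complex.continuous_re.comp hf.continuous
  have hcenter : g c - (f c).re ≤ ε / 2 :=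
    (hg.sub_re hgc hf).le_of_forall_sphere_le (hgc.sub hfre.continuousOn) hr hD
      fun x hx => (abs_le.1 (happrox x hx)).2
  have hfi : CircleIntegrable (fun x => (f x).re) c r := hfre.continuousOn.circleIntegrable'
  have hgi : CircleIntegrable g c r := hgs.circleIntegrable hr.le
  have hcircle : circleAverage (fun x => (f x).re - g x) c r ≤ ε / 2 :=
    circleAverage_mono_on_of_le_circle (hfi.sub hgi) fun x hx => by
      rw [abs_of_pos hr] at hx
      linarith [(abs_le.1 (happrox x hx)).1]
  rw [circleAverage_fun_sub hfi hgi, circleAverage_re_of_differentiable hf] at hcircle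
  linarith

end HasLocalSubmeanOn

section ComplexLines

variable {E : Type*} [NormedAddCommGroup E] [NormedSpace ℂ E]

theorem circleAverage_comp_line (u : E → ℝ) (z v : E) (p : ℂ) (r : ℝ) :
    circleAverage (fun t : ℂ => u (z + t • v)) p r
      = 1 / (2 * π) * ∫ θ in (0 : ℝ)..(2 * π),
          u (z + p • v + ((r : ℂ) * Complex.exp ((θ : ℂ) * Complex.I)) • v) := by
  simp only [circleAverage_def, circleMap, add_smul, add_assoc, one_div, smul_eq_mul]

theorem PSHOn.hasLocalSubmeanOn_comp_line {u : E → ℝ} {Ω : Set E} (hu : PSHOn u Ω) (z v : E) :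
    HasLocalSubmeanOn (fun t : ℂ => u (z + t • v)) ((fun t : ℂ => z + t • v) ⁻¹' Ω) := by
  intro p hp
  obtain ⟨R, hR, hsub⟩ := hu.2 _ hp v
  refine ⟨R, hR, fun ρ hρ hρR hball => ?_⟩
  rw [circleAverage_comp_line]
  refine hsub ρ hρ hρR fun t ht => ?_
  simpa [add_smul, add_assoc] using hball (mem_closedBall_iff_norm.2 (by simpa using ht) :
    p + t ∈ closedBall p ρ)

theorem PSHOn.le_circleAverage_comp_line {u : E → ℝ} {Ω : Set E} (hu : PSHOn u Ω)
    (huc : ContinuousOn u Ω) {z v : E} {r : ℝ} (hr : 0 < r)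
    (hdisk : ∀ t : ℂ, ‖t‖ ≤ r → z + t • v ∈ Ω) :
    u z ≤ circleAverage (fun t : ℂ => u (z + t • v)) 0 r := by
  simpa using (hu.hasLocalSubmeanOn_comp_line z v).le_circleAverage
    (huc.comp (by fun_prop : Continuous fun t : ℂ => z + t • v).continuousOn fun _ ht => ht) hr
    fun t ht => hdisk t (mem_closedBall_zero_iff.1 ht)

theorem PSHOn.iUnion_of_antitone {Ω : ℕ → Set E} (hmono : Monotone Ω)
    (hopen : ∀ j, IsOpen (Ω j)) {u : ℕ → E → ℝ} {U : E → ℝ} (hpsh : ∀ j, PSHOn (u j) (Ω j))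
    (hcont : ∀ j, ContinuousOn (u j) (Ω j)) (hanti : ∀ ⦃i j⦄, i ≤ j → ∀ x ∈ Ω i, u j x ≤ u i x)
    (hlim : ∀ x ∈ ⋃ j, Ω j, Tendsto (fun j => u j x) atTop (𝓝 (U x)))
    (hU : ContinuousOn U (⋃ j, Ω j)) : PSHOn U (⋃ j, Ω j) := by
  refine ⟨hU.upperSemicontinuousOn, fun z hz v => ⟨1, one_pos, fun r hr _ hdisk => ?_⟩⟩
  have hline : Continuous fun t : ℂ => z + t • v := by fun_prop
  obtain ⟨j₀, hj₀⟩ : ∃ j₀, (fun t : ℂ => z + t • v) '' closedBall 0 r ⊆ Ω j₀ :=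
    ((isCompact_closedBall 0 r).image hline).elim_directed_cover Ω hopen
      (by rintro _ ⟨t, ht, rfl⟩; exact hdisk t (mem_closedBall_zero_iff.1 ht)) hmono.directed_le
  have hdisk' : ∀ k, ∀ t : ℂ, ‖t‖ ≤ r → z + t • v ∈ Ω (k + j₀) := fun k t ht =>
    hmono (Nat.le_add_left _ _) (hj₀ ⟨t, mem_closedBall_zero_iff.2 ht, rfl⟩)
  have hcircle : ∀ k, ∀ t ∈ sphere (0 : ℂ) |r|, z + t • v ∈ Ω (k + j₀) := fun k t ht =>
    hdisk' k t (by rw [mem_sphere_zero_iff_norm.1 ht, abs_of_pos hr])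
  have hmean := circleAverage_comp_line U z v 0 r
  simp only [zero_smul, add_zero] at hmean
  rw [← hmean]
  refine le_of_tendsto_of_tendsto' ((hlim z hz).comp (tendsto_add_atTop_nat j₀))
    (tendsto_circleAverage_of_antitone (fun k => ?_) ?_ (fun t ht k l hkl => ?_) fun t ht => ?_)
    fun k => (hpsh _).le_circleAverage_comp_line (hcont _) hr (hdisk' k)
  · exact ((hcont _).comp hline.continuousOn fun t ht => hcircle k t ht).circleIntegrable'
  · exact (hU.comp hline.continuousOn fun t ht =>
      mem_iUnion_of_mem _ (hcircle 0 t ht)).circleIntegrable'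
  · exact hanti (Nat.add_le_add_right hkl j₀) _ (hcircle k t ht)
  · exact (hlim _ (mem_iUnion_of_mem _ (hcircle 0 t ht))).comp (tendsto_add_atTop_nat j₀)

end ComplexLines

section DistanceToComplement

variable {X : Type*} [MetricSpace X]

theorem infDist_compl_pos {V : Set X} (hV : IsOpen V) (hne : Vᶜ.Nonempty) {x : X} (hx : x ∈ V) :
    0 < infDist x Vᶜ :=
  (hV.isClosed_compl.notMem_iff_infDist_pos hne).1 fun h => h hx

theorem continuousOn_neg_log_infDist_compl {V : Set X} (hV : IsOpen V) (hne : Vᶜ.Nonempty) :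
    ContinuousOn (fun x => -Real.log (infDist x Vᶜ)) V :=
  ((continuous_infDist_pt _).continuousOn.log fun _ hx => (infDist_compl_pos hV hne hx).ne').neg

theorem tendsto_infDist_compl_iUnion [ProperSpace X] {Ω : ℕ → Set X} (hmono : Monotone Ω)
    (hopen : ∀ j, IsOpen (Ω j)) (hne : (⋃ j, Ω j)ᶜ.Nonempty) (x : X) :
    Tendsto (fun j => infDist x (Ω j)ᶜ) atTop (𝓝 (infDist x (⋃ j, Ω j)ᶜ)) := by
  have hsub : ∀ j, (⋃ j, Ω j)ᶜ ⊆ (Ω j)ᶜ := fun j => compl_subset_compl.2 (subset_iUnion Ω j)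
  refine tendsto_order.2 ⟨fun a ha => ?_, fun a ha => Eventually.of_forall fun j =>
    (infDist_le_infDist_of_subset (hsub j) hne).trans_lt ha⟩
  obtain ⟨ρ, haρ, hρ⟩ := exists_between ha
  obtain ⟨j₀, hj₀⟩ : ∃ j₀, closedBall x ρ ⊆ Ω j₀ :=
    (isCompact_closedBall x ρ).elim_directed_cover Ω hopen
      ((closedBall_subset_ball hρ).trans ball_infDist_compl_subset) hmono.directed_le
  filter_upwards [eventually_ge_atTop j₀] with j hj
  refine haρ.trans_le ((le_infDist ((hne.mono (hsub j)))).2 fun y hy => ?_)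
  by_contra! hyx
  exact hy (hmono hj (hj₀ (mem_closedBall'.2 hyx.le)))

end DistanceToComplement

/-- an increasing union of pseudoconvex open sets is pseudoconvex. -/
theorem increasing_union_pseudoconvex (n : ℕ)
    (Ω : ℕ → Set (EuclideanSpace ℂ (Fin n)))
    (hmono : Monotone Ω) (hpc : ∀ j, IsPseudoconvex (Ω j)) :
    IsPseudoconvex (⋃ j, Ω j) := by
  have hopen : ∀ j, IsOpen (Ω j) := fun j => (hpc j).1
  refine ⟨isOpen_iUnion hopen, or_iff_not_imp_left.2 fun hU => ?_⟩
  have hne : (⋃ j, Ω j)ᶜ.Nonempty := nonempty_compl.2 hU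
  have hne' : ∀ j, (Ω j)ᶜ.Nonempty := fun j =>
    hne.mono (compl_subset_compl.2 (subset_iUnion Ω j))
  have hpsh : ∀ j, PSHOn (fun z => -Real.log (infDist z (Ω j)ᶜ)) (Ω j) := fun j =>
    (hpc j).2.resolve_left fun h => hU (eq_univ_of_univ_subset (h ▸ subset_iUnion Ω j))
  refine PSHOn.iUnion_of_antitone hmono hopen hpsh
    (fun j => continuousOn_neg_log_infDist_compl (hopen j) (hne' j)) (fun i j hij x hx => ?_)
    (fun x hx => ?_) (continuousOn_neg_log_infDist_compl (isOpen_iUnion hopen) hne)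
  · exact neg_le_neg (Real.log_le_log (infDist_compl_pos (hopen i) (hne' i) hx)
      (infDist_le_infDist_of_subset (compl_subset_compl.2 (hmono hij)) (hne' j)))
  · exact ((Real.continuousAt_log (infDist_compl_pos (isOpen_iUnion hopen) hne hx).ne').tendsto.comp
      (tendsto_infDist_compl_iUnion hmono hopen hne x)).neg
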